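/- With |μ_R⟩ as above and |ϑ_T⟩ = (1/√T) Σ_{t=1}^T ω^t |t⟩ for ω = e^{2πi/T}: for every ε > 0 and integer d there exist R, T such that for every unit vector |φ⟩ ∈ ℂ^d (with arbitrary complex coordinates) there is a permutation π of [TdR] with Re (⟨ϑ_T| ⊗ ⟨μ_R|) P_π (|ϑ_T⟩ ⊗ |φ⟩ ⊗ |μ_R⟩) ≥ 1 − ε. -/

import Mathlib

open Finset Complex

/-- The `R`-th harmonic number `χ_R = ∑_{r=1}^R 1/r`. -/
noncomputable def harmonic' (R : ℕ) : ℝ := ∑ r ∈ Finset.range R, 1 / ((r : ℝ) + 1)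

/-- The coordinates of the embezzling state `|μ_R⟩ = (1/√χ_R) ∑_{r=1}^R r^{-1/2} |r⟩`. -/
noncomputable def muVec (R : ℕ) (r : Fin R) : ℝ :=
  (Real.sqrt (harmonic' R))⁻¹ * (Real.sqrt ((r : ℝ) + 1))⁻¹

/-- The coordinates of `|ϑ_T⟩ = (1/√T) ∑_{t=1}^T ω^t |t⟩`, `ω = e^{2πi/T}`. -/
noncomputable def varthetaVec (T : ℕ) (t : Fin T) : ℂ :=
  ((Real.sqrt T)⁻¹ : ℝ) * Complex.exp (2 * Real.pi * Complex.I / T) ^ ((t : ℕ) + 1)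

section Aux

lemma phase_choice (T : ℕ) (hT : 0 < T) (z : ℂ) :
    ∃ k : ℕ, k < T ∧
      ‖z‖ * Real.cos (Real.pi / T) ≤
        (Complex.exp (2 * Real.pi * Complex.I / T) ^ k * z).re := by
  have hTR : (0:ℝ) < T := by exact_mod_cast hT
  set θ : ℝ := Complex.arg z with hθ
  set x : ℝ := -θ * T / (2 * Real.pi) with hx
  set k₀ : ℤ := ⌊x + 1/2⌋ with hk₀
  refine ⟨(k₀ % T).toNat, ?_, ?_⟩
  · have h1 : k₀ % (T:ℤ) < (T:ℤ) := Int.emod_lt_of_pos _ (by exact_mod_cast hT)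
    omega
  · have hnneg : 0 ≤ k₀ % (T:ℤ) := Int.emod_nonneg _ (by positivity)
    set k : ℕ := (k₀ % T).toNat with hk
    have hkk : (k : ℤ) = k₀ % T := Int.toNat_of_nonneg hnneg
    have hω : Complex.exp (2 * Real.pi * Complex.I / T) ^ k
        = Complex.exp (((2 * Real.pi * k / T : ℝ)) * Complex.I) := by
      rw [← Complex.exp_nat_mul]
      congr 1
      push_cast
      field_simp
    have hz : z = (‖z‖ : ℂ) * Complex.exp (θ * Complex.I) := by
      rw [hθ, Complex.norm_mul_exp_arg_mul_I]
    have key : (Complex.exp (2 * Real.pi * Complex.I / T) ^ k * z).re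
        = ‖z‖ * Real.cos (2 * Real.pi * k / T + θ) := by
      conv_lhs => rw [hω, hz]
      rw [show Complex.exp (((2 * Real.pi * k / T : ℝ)) * Complex.I) *
          ((‖z‖ : ℂ) * Complex.exp (θ * Complex.I))
          = (‖z‖ : ℂ) * Complex.exp (((2 * Real.pi * k / T + θ : ℝ)) * Complex.I) by
        rw [mul_comm, mul_assoc, ← Complex.exp_add]; push_cast; ring_nf]
      rw [Complex.re_ofReal_mul, Complex.exp_ofReal_mul_I_re]
    rw [key]
    have habs : 0 ≤ ‖z‖ := norm_nonneg z
    refine mul_le_mul_of_nonneg_left ?_ habs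
    have hπ : 0 < Real.pi := Real.pi_pos
    have hper : Real.cos (2 * Real.pi * k / T + θ)
        = Real.cos (2 * Real.pi * k₀ / T + θ) := by
      have : (2 * Real.pi * k / T + θ) = (2 * Real.pi * k₀ / T + θ) + (-(k₀ / T) : ℤ) * (2 * Real.pi) := by
        have hmod : (k:ℝ) = k₀ - T * ((k₀/T : ℤ) : ℝ) := by
          have h2 : (k : ℤ) = k₀ - T * (k₀ / (T:ℤ)) := by rw [hkk, Int.emod_def]
          exact_mod_cast congrArg (Int.cast : ℤ → ℝ) h2
        rw [hmod]
        push_cast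
        field_simp
        ring
      rw [this, Real.cos_add_int_mul_two_pi]
    rw [hper]
    have harg : 2 * Real.pi * k₀ / T + θ = (2 * Real.pi / T) * (k₀ - x) := by
      rw [hx]
      field_simp
      ring
    have hround : |(k₀ : ℝ) - x| ≤ 1/2 := by
      have h1 : (k₀ : ℝ) ≤ x + 1/2 := Int.floor_le _
      have h2 : x + 1/2 - 1 < k₀ := Int.sub_one_lt_floor _
      rw [abs_le]; constructor <;> linarith
    have habs2 : |2 * Real.pi * k₀ / T + θ| ≤ Real.pi / T := by
      rw [harg, abs_mul]
      have : |2 * Real.pi / T| = 2 * Real.pi / T := abs_of_pos (by positivity)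
      rw [this]
      calc 2 * Real.pi / T * |(k₀:ℝ) - x| ≤ 2 * Real.pi / T * (1/2) :=
            mul_le_mul_of_nonneg_left hround (by positivity)
        _ = Real.pi / T := by ring
    calc Real.cos (Real.pi / T) ≤ Real.cos |2 * Real.pi * k₀ / T + θ| := by
          apply Real.cos_le_cos_of_nonneg_of_le_pi (abs_nonneg _)
          · have h1T : (1:ℝ) ≤ T := by exact_mod_cast hT
            calc Real.pi / T ≤ Real.pi / 1 :=
                  div_le_div_of_nonneg_left hπ.le one_pos h1T
              _ = Real.pi := by ring
          · exact habs2
      _ = Real.cos (2 * Real.pi * k₀ / T + θ) := Real.cos_abs _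

lemma omega_pow_T (T : ℕ) (hT : 0 < T) :
    Complex.exp (2 * Real.pi * Complex.I / T) ^ T = 1 := by
  rw [← Complex.exp_nat_mul]
  have hTne : (T:ℂ) ≠ 0 := by exact_mod_cast hT.ne'
  rw [show (T:ℂ) * (2 * Real.pi * Complex.I / T) = 2 * Real.pi * Complex.I by
    field_simp]
  exact Complex.exp_two_pi_mul_I

lemma omega_pow_mod (T : ℕ) (hT : 0 < T) (n : ℕ) :
    Complex.exp (2 * Real.pi * Complex.I / T) ^ (n % T) =
      Complex.exp (2 * Real.pi * Complex.I / T) ^ n := by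
  conv_rhs => rw [← Nat.div_add_mod n T]
  rw [pow_add, pow_mul, omega_pow_T T hT, one_pow, one_mul]

lemma vartheta_conj_mul (T : ℕ) (hT : 0 < T) [NeZero T] (t k : Fin T) :
    (starRingEnd ℂ) (varthetaVec T t) * varthetaVec T (t + k)
      = (T:ℂ)⁻¹ * Complex.exp (2 * Real.pi * Complex.I / T) ^ (k : ℕ) := by
  set ω := Complex.exp (2 * Real.pi * Complex.I / T) with hω
  have hnormSq : Complex.normSq ω = 1 := by
    rw [Complex.normSq_eq_norm_sq, hω, Complex.norm_exp]
    rw [show (2 * Real.pi * Complex.I / T).re = 0 by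
      simp [Complex.div_re, Complex.mul_re]]
    simp
  have hpow : ω ^ (((t + k : Fin T) : ℕ) + 1) = ω ^ (k:ℕ) * ω ^ ((t:ℕ) + 1) := by
    have h1 : ((t + k : Fin T) : ℕ) = ((t:ℕ) + (k:ℕ)) % T := by
      simp [Fin.add_def]
    rw [h1, pow_succ, omega_pow_mod T hT]
    ring
  have hc : (starRingEnd ℂ) (ω ^ ((t:ℕ)+1)) * ω ^ ((t:ℕ)+1) = 1 := by
    rw [mul_comm, Complex.mul_conj, map_pow, hnormSq, one_pow]
    norm_num
  have hs : ((Real.sqrt T)⁻¹ : ℂ) * ((Real.sqrt T)⁻¹ : ℂ) = (T:ℂ)⁻¹ := by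
    norm_cast
    rw [← mul_inv, Real.mul_self_sqrt (Nat.cast_nonneg T)]
    push_cast
    rfl
  unfold varthetaVec
  rw [map_mul, Complex.conj_ofReal, hpow, ← hω]
  push_cast
  calc ((Real.sqrt T)⁻¹ : ℂ) * (starRingEnd ℂ) (ω ^ ((t:ℕ)+1)) *
      (((Real.sqrt T)⁻¹ : ℂ) * (ω ^ (k:ℕ) * ω ^ ((t:ℕ)+1)))
      = (((Real.sqrt T)⁻¹ : ℂ) * ((Real.sqrt T)⁻¹ : ℂ)) *
        ((starRingEnd ℂ) (ω ^ ((t:ℕ)+1)) * ω ^ ((t:ℕ)+1)) * ω ^ (k:ℕ) := by ring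
    _ = (T:ℂ)⁻¹ * ω ^ (k:ℕ) := by rw [hc, hs, mul_one]

lemma exists_perm_extend {d R : ℕ} (hd : 0 < d) (g : Fin R → Fin d × Fin R)
    (hg : Function.Injective g) :
    ∃ τ : Equiv.Perm (Fin d × Fin R), ∀ s, τ (⟨0, hd⟩, s) = g s := by
  classical
  let p : Fin d × Fin R → Prop := fun x => x.1 = ⟨0, hd⟩
  let q : Fin d × Fin R → Prop := fun y => y ∈ Set.range g
  let e₁ : {x // p x} ≃ Fin R :=
    { toFun := fun x => x.1.2
      invFun := fun s => ⟨(⟨0, hd⟩, s), rfl⟩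
      left_inv := by rintro ⟨⟨j, s⟩, hj⟩; simp [p] at hj; subst hj; rfl
      right_inv := fun s => rfl }
  let e₂ : Fin R ≃ {y // q y} := Equiv.ofInjective g hg
  refine ⟨(e₁.trans e₂).extendSubtype, fun s => ?_⟩
  have := Equiv.extendSubtype_apply_of_mem (e₁.trans e₂) (⟨0, hd⟩, s) rfl
  rw [this]
  rfl

lemma block_inj {B a a' b b' : ℕ} (hb : b < B) (hb' : b' < B)
    (h : a * B + b = a' * B + b') : a = a' ∧ b = b' := by
  have hB : 0 < B := Nat.pos_of_ne_zero (by rintro rfl; omega)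
  have h1 : ∀ x y : ℕ, y < B → (x * B + y) / B = x := by
    intro x y hy
    rw [add_comm, mul_comm, Nat.add_mul_div_left _ _ hB, Nat.div_eq_of_lt hy, Nat.zero_add]
  have h2 : ∀ x y : ℕ, y < B → (x * B + y) % B = y := by
    intro x y hy
    rw [add_comm, mul_comm, Nat.add_mul_mod_self_left, Nat.mod_eq_of_lt hy]
  constructor
  · rw [← h1 a b hb, ← h1 a' b' hb', h]
  · rw [← h2 a b hb, ← h2 a' b' hb', h]

lemma harmonic'_pos {R : ℕ} (hR : 0 < R) : 0 < harmonic' R := by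
  unfold harmonic'
  apply Finset.sum_pos (fun i _ => by positivity)
  exact Finset.nonempty_range_iff.mpr hR.ne'

lemma harmonic'_mono : Monotone harmonic' := by
  intro a b hab
  unfold harmonic'
  apply Finset.sum_le_sum_of_subset_of_nonneg (Finset.range_subset_range.mpr hab)
  intro i _ _; positivity

lemma harmonic'_mul_le (R' M : ℕ) (hR' : 0 < R') :
    harmonic' (R' * M) ≤ harmonic' R' + M := by
  rcases le_or_gt (R' * M) R' with h | h
  · calc harmonic' (R' * M) ≤ harmonic' R' := harmonic'_mono h
      _ ≤ _ := by simp
  · unfold harmonic'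
    rw [← Finset.sum_range_add_sum_Ico _ h.le]
    gcongr
    calc ∑ r ∈ Finset.Ico R' (R' * M), 1 / ((r:ℝ) + 1)
        ≤ ∑ r ∈ Finset.Ico R' (R' * M), 1 / ((R':ℝ)) := by
          apply Finset.sum_le_sum
          intro i hi
          have := (Finset.mem_Ico.mp hi).1
          have hR'R : (R':ℝ) ≤ (i:ℝ) + 1 := by
            have : (R':ℝ) ≤ (i:ℝ) := by exact_mod_cast this
            linarith
          apply one_div_le_one_div_of_le (by exact_mod_cast hR') hR'R
      _ ≤ M := by
          rw [Finset.sum_const, Nat.card_Ico]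
          rw [nsmul_eq_mul]
          rw [div_eq_mul_inv, one_mul]
          have h1 : ((R' * M - R' : ℕ) : ℝ) ≤ (R':ℝ) * M := by
            push_cast [Nat.cast_sub h.le]
            nlinarith [Nat.cast_nonneg (α := ℝ) R']
          have hR'pos : (0:ℝ) < R' := by exact_mod_cast hR'
          calc ((R' * M - R' : ℕ) : ℝ) * (R':ℝ)⁻¹ ≤ (R':ℝ) * M * (R':ℝ)⁻¹ := by
                apply mul_le_mul_of_nonneg_right h1 (by positivity)
            _ = M := by field_simp

end Aux


lemma mu_ge {R n : ℕ} (s : Fin R) (h : (s : ℕ) + 1 ≤ n) :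
    (Real.sqrt (harmonic' R))⁻¹ * (Real.sqrt n)⁻¹ ≤ muVec R s := by
  unfold muVec
  have h1 : Real.sqrt ((s:ℝ) + 1) ≤ Real.sqrt n := Real.sqrt_le_sqrt (by exact_mod_cast h)
  have h2 : 0 < Real.sqrt ((s:ℝ) + 1) := Real.sqrt_pos.mpr (by positivity)
  exact mul_le_mul_of_nonneg_left (inv_anti₀ h2 h1) (by positivity)

lemma mu_nonneg {R : ℕ} (s : Fin R) : 0 ≤ muVec R s := by
  unfold muVec; positivity

lemma main_sum_bound {d R' M : ℕ} (hR' : 0 < R') (hM : 0 < M)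
    (a : Fin d → ℝ) (ha0 : ∀ j, 0 ≤ a j) (m : Fin d → ℕ)
    (hsumm : ∑ j, m j = M) (hmle : ∀ j, m j ≤ M) :
    ∃ g : Fin (R' * M) → Fin d × Fin (R' * M), Function.Injective g ∧
      harmonic' R' * ((∑ j, a j * Real.sqrt (m j)) /
          (harmonic' (R' * M) * Real.sqrt M)) ≤
        ∑ s : Fin (R' * M), muVec (R' * M) s * a ((g s).1) * muVec (R' * M) ((g s).2) := by
  classical
  have hR : 0 < R' * M := Nat.mul_pos hR' hM
  have hH : 0 < harmonic' (R' * M) := harmonic'_pos hR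
  set H : ℝ := harmonic' (R' * M) with hHdef
  obtain ⟨e⟩ : Nonempty ((Σ j : Fin d, Fin (m j)) ≃ Fin M) :=
    ⟨Fintype.equivFinOfCardEq (by simp [hsumm])⟩
  have hρlt : ∀ x : Fin R' × (Σ j : Fin d, Fin (m j)),
      (x.1 : ℕ) * m x.2.1 + (x.2.2 : ℕ) < R' * M := by
    intro x
    calc (x.1 : ℕ) * m x.2.1 + (x.2.2 : ℕ) < (x.1 : ℕ) * m x.2.1 + m x.2.1 := by
          omega
      _ = ((x.1 : ℕ) + 1) * m x.2.1 := by ring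
      _ ≤ R' * m x.2.1 := Nat.mul_le_mul_right _ x.1.isLt
      _ ≤ R' * M := Nat.mul_le_mul_left _ (hmle _)
  obtain ⟨G, hGinj, hG1, hG2⟩ :
      ∃ G : (Fin R' × Σ j : Fin d, Fin (m j)) → Fin d × Fin (R' * M),
        Function.Injective G ∧ (∀ x, (G x).1 = x.2.1) ∧
          (∀ x, ((G x).2 : ℕ) = (x.1 : ℕ) * m x.2.1 + (x.2.2 : ℕ)) := by
    refine ⟨fun x => (x.2.1, ⟨(x.1 : ℕ) * m x.2.1 + (x.2.2 : ℕ), hρlt x⟩),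
      ?_, fun x => rfl, fun x => rfl⟩
    rintro ⟨ρ₁, j₁, p₁⟩ ⟨ρ₂, j₂, p₂⟩ h
    have hj : j₁ = j₂ := congrArg Prod.fst h
    subst hj
    have hval : (ρ₁ : ℕ) * m j₁ + (p₁ : ℕ) = (ρ₂ : ℕ) * m j₁ + (p₂ : ℕ) :=
      congrArg Fin.val (congrArg Prod.snd h)
    obtain ⟨h1, h2⟩ := block_inj p₁.isLt p₂.isLt hval
    simp only [Prod.mk.injEq, Sigma.mk.inj_iff, heq_eq_eq, true_and]
    exact ⟨Fin.ext h1, Fin.ext h2⟩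
  obtain ⟨E, hEval⟩ :
      ∃ E : (Fin R' × Σ j : Fin d, Fin (m j)) ≃ Fin (R' * M),
        ∀ x, ((E x : Fin (R' * M)) : ℕ) + 1 ≤ ((x.1 : ℕ) + 1) * M := by
    refine ⟨(Equiv.prodCongr (Equiv.refl _) e).trans finProdFinEquiv, fun x => ?_⟩
    have h1 : ((((Equiv.prodCongr (Equiv.refl _) e).trans finProdFinEquiv) x
        : Fin (R' * M)) : ℕ) = (e x.2 : ℕ) + M * (x.1 : ℕ) := by
      simp [finProdFinEquiv]
    have h2 : (e x.2 : ℕ) < M := (e x.2).isLt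
    rw [h1]
    nlinarith [x.1.isLt]
  refine ⟨G ∘ E.symm, hGinj.comp E.symm.injective, ?_⟩
  have hsum_comp : ∑ s : Fin (R' * M),
      muVec (R' * M) s * a (((G ∘ E.symm) s).1) * muVec (R' * M) (((G ∘ E.symm) s).2)
      = ∑ x : Fin R' × (Σ j : Fin d, Fin (m j)),
        muVec (R' * M) (E x) * a ((G x).1) * muVec (R' * M) ((G x).2) := by
    rw [← Equiv.sum_comp E (fun s => muVec (R' * M) s * a (((G ∘ E.symm) s).1) *
      muVec (R' * M) (((G ∘ E.symm) s).2))]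
    exact Finset.sum_congr rfl (fun x _ => by
      simp only [Function.comp_apply, Equiv.symm_apply_apply])
  rw [hsum_comp]
  have hterm : ∀ x : Fin R' × (Σ j : Fin d, Fin (m j)),
      a x.2.1 * (H⁻¹ * ((((x.1 : ℕ) : ℝ) + 1)⁻¹ *
          ((Real.sqrt M)⁻¹ * (Real.sqrt (m x.2.1))⁻¹)))
        ≤ muVec (R' * M) (E x) * a ((G x).1) * muVec (R' * M) ((G x).2) := by
    intro x
    have hx1 : (0:ℝ) ≤ ((x.1 : ℕ) : ℝ) + 1 := by positivity
    have hmu1 : (Real.sqrt H)⁻¹ * (Real.sqrt ((((x.1 : ℕ) : ℝ) + 1) * M))⁻¹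
        ≤ muVec (R' * M) (E x) := by
      have := mu_ge (E x) (n := ((x.1 : ℕ) + 1) * M) (hEval x)
      convert this using 3
      push_cast
      ring
    have hmu2 : (Real.sqrt H)⁻¹ * (Real.sqrt ((((x.1 : ℕ) : ℝ) + 1) * m x.2.1))⁻¹
        ≤ muVec (R' * M) ((G x).2) := by
      have hle : ((G x).2 : ℕ) + 1 ≤ ((x.1 : ℕ) + 1) * m x.2.1 := by
        rw [hG2 x]
        have := x.2.2.isLt
        nlinarith
      have := mu_ge ((G x).2) hle
      convert this using 3
      push_cast
      ring
    have key : ((Real.sqrt H)⁻¹ * (Real.sqrt ((((x.1 : ℕ) : ℝ) + 1) * M))⁻¹) * a x.2.1 *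
        ((Real.sqrt H)⁻¹ * (Real.sqrt ((((x.1 : ℕ) : ℝ) + 1) * m x.2.1))⁻¹)
        = a x.2.1 * (H⁻¹ * ((((x.1 : ℕ) : ℝ) + 1)⁻¹ *
          ((Real.sqrt M)⁻¹ * (Real.sqrt (m x.2.1))⁻¹))) := by
      rw [Real.sqrt_mul hx1 (M:ℝ), Real.sqrt_mul hx1 ((m x.2.1 : ℕ):ℝ)]
      have e1 : Real.sqrt H * Real.sqrt H = H := Real.mul_self_sqrt hH.le
      have e2 : Real.sqrt (((x.1 : ℕ) : ℝ) + 1) * Real.sqrt (((x.1 : ℕ) : ℝ) + 1)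
          = ((x.1 : ℕ) : ℝ) + 1 := Real.mul_self_sqrt hx1
      conv_rhs => rw [← e1, ← e2]
      ring
    rw [← key]
    have h1 : 0 ≤ a ((G x).1) := ha0 _
    rw [hG1 x]
    apply mul_le_mul
    · exact mul_le_mul hmu1 le_rfl (ha0 _) (mu_nonneg _)
    · exact hmu2
    · positivity
    · exact mul_nonneg (mu_nonneg _) (ha0 _)
  calc harmonic' R' * ((∑ j, a j * Real.sqrt (m j)) / (H * Real.sqrt M))
      = ∑ x : Fin R' × (Σ j : Fin d, Fin (m j)),
        a x.2.1 * (H⁻¹ * ((((x.1 : ℕ) : ℝ) + 1)⁻¹ *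
          ((Real.sqrt M)⁻¹ * (Real.sqrt (m x.2.1))⁻¹))) := by
        have hinner : ∀ ρ' : Fin R',
            ∑ w : (Σ j : Fin d, Fin (m j)),
              a w.1 * (H⁻¹ * ((((ρ' : ℕ) : ℝ) + 1)⁻¹ *
                ((Real.sqrt M)⁻¹ * (Real.sqrt (m w.1))⁻¹)))
            = (((ρ' : ℕ) : ℝ) + 1)⁻¹ *
              ((∑ j, a j * Real.sqrt (m j)) * (H⁻¹ * (Real.sqrt M)⁻¹)) := by
          intro ρ'
          rw [← Finset.univ_sigma_univ, Finset.sum_sigma]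
          have hj : ∀ j : Fin d,
              ∑ _pos : Fin (m j), a j * (H⁻¹ * ((((ρ' : ℕ) : ℝ) + 1)⁻¹ *
                ((Real.sqrt M)⁻¹ * (Real.sqrt (m j))⁻¹)))
              = (((ρ' : ℕ) : ℝ) + 1)⁻¹ *
                (a j * Real.sqrt (m j) * (H⁻¹ * (Real.sqrt M)⁻¹)) := by
            intro j
            rw [Finset.sum_const, Finset.card_univ, Fintype.card_fin, nsmul_eq_mul]
            have hm' : ((m j : ℕ) : ℝ) * (Real.sqrt (m j))⁻¹ = Real.sqrt (m j) := by
              rw [← div_eq_mul_inv]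
              exact Real.div_sqrt
            calc ((m j : ℕ) : ℝ) * (a j * (H⁻¹ * ((((ρ' : ℕ) : ℝ) + 1)⁻¹ *
                ((Real.sqrt M)⁻¹ * (Real.sqrt (m j))⁻¹))))
                = (((m j : ℕ) : ℝ) * (Real.sqrt (m j))⁻¹) *
                  (a j * (H⁻¹ * ((((ρ' : ℕ) : ℝ) + 1)⁻¹ * (Real.sqrt M)⁻¹))) := by ring
              _ = (((ρ' : ℕ) : ℝ) + 1)⁻¹ *
                  (a j * Real.sqrt (m j) * (H⁻¹ * (Real.sqrt M)⁻¹)) := by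
                  rw [hm']; ring
          rw [Finset.sum_congr rfl (fun j _ => hj j), ← Finset.mul_sum, ← Finset.sum_mul]
        rw [Fintype.sum_prod_type, Finset.sum_congr rfl (fun ρ' _ => hinner ρ'),
          ← Finset.sum_mul]
        have hhr : ∑ ρ' : Fin R', (((ρ' : ℕ) : ℝ) + 1)⁻¹ = harmonic' R' := by
          unfold harmonic'
          rw [← Fin.sum_univ_eq_sum_range (fun r => 1 / ((r : ℝ) + 1)) R']
          simp [one_div]
        rw [hhr]
        rw [div_eq_mul_inv, mul_inv]
    _ ≤ ∑ x : Fin R' × (Σ j : Fin d, Fin (m j)),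
        muVec (R' * M) (E x) * a ((G x).1) * muVec (R' * M) ((G x).2) :=
      Finset.sum_le_sum (fun x _ => hterm x)

lemma m_exists {d : ℕ} (M : ℕ) (a : Fin d → ℝ) (ha0 : ∀ j, 0 ≤ a j)
    (hsumsq : ∑ j, (a j)^2 = 1) (z : Fin d) :
    ∃ m : Fin d → ℕ, (∑ j, m j = M) ∧ (∀ j, m j ≤ M) ∧
      ∀ j, (a j)^2 * Real.sqrt M - a j ≤ a j * Real.sqrt (m j) := by
  classical
  set m : Fin d → ℕ := fun j => if j = z then
      M - (∑ j' ∈ Finset.univ.erase z, ⌊(a j')^2 * M⌋₊) else ⌊(a j)^2 * M⌋₊ with hmdef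
  have hFle : (∑ j' ∈ Finset.univ.erase z, ⌊(a j')^2 * M⌋₊) ≤ M := by
    have h1 : ((∑ j' ∈ Finset.univ.erase z, ⌊(a j')^2 * M⌋₊ : ℕ) : ℝ)
        ≤ ∑ j' ∈ Finset.univ.erase z, (a j')^2 * M := by
      push_cast
      exact Finset.sum_le_sum (fun j _ => Nat.floor_le (by positivity))
    have h2 : ∑ j' ∈ Finset.univ.erase z, (a j')^2 * M ≤ M := by
      rw [← Finset.sum_mul]
      have h3 : ∑ j' ∈ Finset.univ.erase z, (a j')^2 ≤ 1 := by
        rw [← hsumsq]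
        exact Finset.sum_le_sum_of_subset_of_nonneg (Finset.subset_univ _)
          (fun i _ _ => sq_nonneg _)
      nlinarith [Nat.cast_nonneg (α := ℝ) M]
    exact_mod_cast h1.trans h2
  have hmz_eq : m z = M - (∑ j' ∈ Finset.univ.erase z, ⌊(a j')^2 * M⌋₊) := by
    simp [hmdef]
  have hmj_eq : ∀ j, j ≠ z → m j = ⌊(a j)^2 * M⌋₊ := by
    intro j hj
    simp [hmdef, hj]
  refine ⟨m, ?_, ?_, ?_⟩
  · rw [← Finset.add_sum_erase _ _ (Finset.mem_univ z)]
    rw [Finset.sum_congr rfl (fun j hj => hmj_eq j (Finset.mem_erase.mp hj).1)]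
    rw [hmz_eq]
    omega
  · intro j
    by_cases hj : j = z
    · rw [hj, hmz_eq]; omega
    · rw [hmj_eq j hj]
      have h1 : ((⌊(a j)^2 * M⌋₊ : ℕ) : ℝ) ≤ (M:ℝ) := by
        calc ((⌊(a j)^2 * M⌋₊ : ℕ) : ℝ) ≤ (a j)^2 * M := Nat.floor_le (by positivity)
          _ ≤ 1 * M := by
            have : (a j)^2 ≤ 1 := by
              nlinarith [Finset.single_le_sum (f := fun j => (a j)^2)
                (fun i _ => sq_nonneg _) (Finset.mem_univ j)]
            nlinarith [Nat.cast_nonneg (α := ℝ) M]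
          _ = M := one_mul _
      exact_mod_cast h1
  · intro j
    by_cases hj : j = z
    · have hmzj : (a j)^2 * M ≤ (m j : ℝ) := by
        rw [hj, hmz_eq]
        have hcast : (((M - (∑ j' ∈ Finset.univ.erase z, ⌊(a j')^2 * M⌋₊) : ℕ)) : ℝ) = (M:ℝ)
            - ((∑ j' ∈ Finset.univ.erase z, ⌊(a j')^2 * M⌋₊ : ℕ) : ℝ) := by
          push_cast [Nat.cast_sub hFle]
          ring
        rw [hcast]
        have h1 : ((∑ j' ∈ Finset.univ.erase z, ⌊(a j')^2 * M⌋₊ : ℕ) : ℝ)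
            ≤ ∑ j' ∈ Finset.univ.erase z, (a j')^2 * M := by
          push_cast
          exact Finset.sum_le_sum (fun j _ => Nat.floor_le (by positivity))
        have h2 : ∑ j' ∈ Finset.univ.erase z, (a j')^2 * M = (1 - (a z)^2) * M := by
          rw [← Finset.sum_mul]
          congr 1
          rw [Finset.sum_erase_eq_sub (Finset.mem_univ z), hsumsq]
        linarith
      have h1 : a j * Real.sqrt M ≤ Real.sqrt (m j) := by
        rw [show a j * Real.sqrt M = Real.sqrt ((a j)^2 * M) by
          rw [Real.sqrt_mul (by positivity), Real.sqrt_sq (ha0 j)]]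
        exact Real.sqrt_le_sqrt hmzj
      nlinarith [ha0 j, Real.sqrt_nonneg (M:ℝ)]
    · have hmj : (a j)^2 * M - 1 ≤ (m j : ℝ) := by
        rw [hmj_eq j hj]
        exact le_of_lt (Nat.sub_one_lt_floor _)
      by_cases haM : 1 ≤ a j * Real.sqrt M
      · have h2 : a j * Real.sqrt M - 1 ≤ Real.sqrt (m j) := by
          rw [show (m j : ℝ) = Real.sqrt ((m j : ℝ))^2 by
            rw [Real.sq_sqrt (Nat.cast_nonneg _)]] at hmj
          nlinarith [Real.sqrt_nonneg ((m j : ℝ)), Real.sq_sqrt (Nat.cast_nonneg (α := ℝ) M),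
            Real.sqrt_nonneg (M:ℝ)]
        nlinarith [ha0 j]
      · push_neg at haM
        nlinarith [ha0 j, mul_nonneg (ha0 j) (Real.sqrt_nonneg ((m j : ℝ)))]

lemma cs_sum_le_sqrt_card {d : ℕ} (a : Fin d → ℝ) (ha0 : ∀ j, 0 ≤ a j)
    (hsumsq : ∑ j, (a j)^2 = 1) : ∑ j, a j ≤ Real.sqrt d := by
  have h1 := Finset.sum_mul_sq_le_sq_mul_sq Finset.univ a (fun _ => (1:ℝ))
  simp only [mul_one, one_pow, Finset.sum_const, Finset.card_univ, Fintype.card_fin,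
    nsmul_eq_mul, hsumsq, one_mul] at h1
  rw [show ((d:ℝ)) = Real.sqrt d ^2 by rw [Real.sq_sqrt (Nat.cast_nonneg _)]] at h1
  nlinarith [Real.sqrt_nonneg (d:ℝ), Finset.sum_nonneg (fun j (_ : j ∈ Finset.univ) => ha0 j)]

lemma cs_sum_mul_sqrt_le {d M : ℕ} (a : Fin d → ℝ) (m : Fin d → ℕ) (ha0 : ∀ j, 0 ≤ a j)
    (hsumsq : ∑ j, (a j)^2 = 1) (hsumm : ∑ j, m j = M) :
    ∑ j, a j * Real.sqrt (m j) ≤ Real.sqrt M := by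
  have h1 := Finset.sum_mul_sq_le_sq_mul_sq Finset.univ a (fun j => Real.sqrt (m j))
  have h2 : ∑ j, Real.sqrt ((m j : ℝ))^2 = (M:ℝ) := by
    have h3 : ∀ j, Real.sqrt ((m j : ℝ))^2 = (m j : ℝ) :=
      fun j => Real.sq_sqrt (Nat.cast_nonneg _)
    rw [Finset.sum_congr rfl (fun j _ => h3 j)]
    exact_mod_cast congrArg (Nat.cast : ℕ → ℝ) hsumm
  simp only [hsumsq, one_mul] at h1
  rw [h2] at h1
  have h4 : 0 ≤ ∑ j, a j * Real.sqrt (m j) :=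
    Finset.sum_nonneg (fun j _ => mul_nonneg (ha0 j) (Real.sqrt_nonneg _))
  nlinarith [Real.sq_sqrt (Nat.cast_nonneg (α := ℝ) M), Real.sqrt_nonneg (M:ℝ)]

set_option maxHeartbeats 2000000 in
/-- Generalized embezzlement for vectors with arbitrary complex coordinates:
for every `ε > 0` and `d` there are `R, T` such that every unit vector `|φ⟩ ∈ ℂ^d`
satisfies `Re (⟨ϑ_T| ⊗ ⟨μ_R|) P_π (|ϑ_T⟩ ⊗ |φ⟩ ⊗ |μ_R⟩) ≥ 1 - ε` for some permutation
`π` of `[T] × [d] × [R] ≃ [TdR]`; the bra `⟨ϑ_T| ⊗ ⟨μ_R|` is padded with zeros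
(occupying the first copy of `[R]`-blocks, i.e. `j = 0`), and `(P_π ψ)(x) = ψ(π⁻¹ x)`. -/
theorem embezzlement_general (ε : ℝ) (hε : 0 < ε) (d : ℕ) (hd : 0 < d) :
    ∃ R T : ℕ, 0 < R ∧ 0 < T ∧
      ∀ c : Fin d → ℂ, (∑ j, ‖c j‖ ^ 2 = 1) →
        ∃ π : Equiv.Perm (Fin T × Fin d × Fin R),
          1 - ε ≤ (∑ p : Fin T × Fin d × Fin R,
            (starRingEnd ℂ) (if p.2.1 = (⟨0, hd⟩ : Fin d)
                then varthetaVec T p.1 * (muVec R p.2.2 : ℂ) else 0) *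
              (varthetaVec T (π.symm p).1 * c (π.symm p).2.1 *
                (muVec R (π.symm p).2.2 : ℂ))).re := by
  classical
  set δ : ℝ := min (ε/3) (1/2) with hδdef
  have hδpos : 0 < δ := lt_min (by linarith) (by norm_num)
  have hδhalf : δ ≤ 1/2 := min_le_right _ _
  have h3δ : 3 * δ ≤ ε := by
    have := min_le_left (ε/3) (1/2)
    simp only [← hδdef] at this
    linarith
  -- choice of T
  obtain ⟨T, hTpos, hcos⟩ : ∃ T : ℕ, 0 < T ∧ 1 - δ ≤ Real.cos (Real.pi / T) := by
    refine ⟨⌈Real.pi / Real.sqrt (2*δ)⌉₊ + 1, Nat.succ_pos _, ?_⟩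
    set T := ⌈Real.pi / Real.sqrt (2*δ)⌉₊ + 1 with hT
    have hTR : Real.pi / Real.sqrt (2*δ) ≤ T := by
      calc Real.pi / Real.sqrt (2*δ) ≤ ⌈Real.pi / Real.sqrt (2*δ)⌉₊ := Nat.le_ceil _
        _ ≤ T := by rw [hT]; push_cast; linarith
    have hTpos' : (0:ℝ) < T := by positivity
    have h2δ : (0:ℝ) < Real.sqrt (2*δ) := Real.sqrt_pos.mpr (by linarith)
    have hle : Real.pi / T ≤ Real.sqrt (2*δ) := by
      rw [div_le_iff₀ hTpos']
      rw [div_le_iff₀ h2δ] at hTR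
      linarith [mul_comm (Real.sqrt (2*δ)) (T:ℝ)]
    have hsq : (Real.pi / T)^2 ≤ 2*δ := by
      calc (Real.pi / T)^2 ≤ (Real.sqrt (2*δ))^2 := by
            apply pow_le_pow_left₀ (by positivity) hle
        _ = 2*δ := Real.sq_sqrt (by linarith)
    calc 1 - δ = 1 - (2*δ)/2 := by ring
      _ ≤ 1 - (Real.pi / T)^2/2 := by linarith
      _ ≤ Real.cos (Real.pi / T) := Real.one_sub_sq_div_two_le_cos
  -- choice of M
  obtain ⟨M, hMpos, hMd⟩ : ∃ M : ℕ, 0 < M ∧ Real.sqrt d / Real.sqrt M ≤ δ := by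
    refine ⟨⌈(d:ℝ)/δ^2⌉₊ + 1, Nat.succ_pos _, ?_⟩
    set M := ⌈(d:ℝ)/δ^2⌉₊ + 1 with hM
    have hMR : (d:ℝ)/δ^2 ≤ M := by
      calc (d:ℝ)/δ^2 ≤ ⌈(d:ℝ)/δ^2⌉₊ := Nat.le_ceil _
        _ ≤ M := by rw [hM]; push_cast; linarith
    have hMpos' : (0:ℝ) < M := by positivity
    have hd' : (d:ℝ) ≤ δ^2 * M := by
      rw [div_le_iff₀ (by positivity)] at hMR
      linarith
    have : Real.sqrt d ≤ δ * Real.sqrt M := by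
      rw [show δ * Real.sqrt M = Real.sqrt (δ^2 * M) by
        rw [Real.sqrt_mul (by positivity), Real.sqrt_sq hδpos.le]]
      exact Real.sqrt_le_sqrt hd'
    rw [div_le_iff₀ (Real.sqrt_pos.mpr hMpos')]
    linarith
  -- choice of R'
  obtain ⟨R', hR'pos, hHbig⟩ : ∃ R' : ℕ, 0 < R' ∧ (M:ℝ) / δ ≤ harmonic' R' := by
    have h := Real.tendsto_sum_range_one_div_nat_succ_atTop
    obtain ⟨N, hN⟩ := Filter.eventually_atTop.mp (Filter.tendsto_atTop.mp h ((M:ℝ)/δ))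
    refine ⟨N + 1, Nat.succ_pos _, ?_⟩
    have := hN (N+1) (by omega)
    unfold harmonic'
    convert this using 2
  have hQ : 1 - δ ≤ harmonic' R' / harmonic' (R' * M) := by
    have hpos' : 0 < harmonic' R' := harmonic'_pos hR'pos
    have hposRM : 0 < harmonic' (R' * M) := harmonic'_pos (Nat.mul_pos hR'pos hMpos)
    have hle1 : harmonic' (R' * M) ≤ harmonic' R' + M := harmonic'_mul_le R' M hR'pos
    rw [le_div_iff₀ hposRM]
    have hMδ : (M:ℝ) ≤ δ * harmonic' R' := by
      rw [div_le_iff₀ hδpos] at hHbig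
      linarith [mul_comm δ (harmonic' R')]
    nlinarith [hδpos.le, hδhalf]
  refine ⟨R' * M, T, Nat.mul_pos hR'pos hMpos, hTpos, ?_⟩
  intro c hc
  haveI : NeZero T := ⟨hTpos.ne'⟩
  have hMR : (0:ℝ) < Real.sqrt M := Real.sqrt_pos.mpr (by exact_mod_cast hMpos)
  set a : Fin d → ℝ := fun j => ‖c j‖ with hadef
  have ha0 : ∀ j, 0 ≤ a j := fun j => norm_nonneg _
  have hsumsq : ∑ j, (a j)^2 = 1 := by rw [hadef]; exact_mod_cast hc
  obtain ⟨m, hsumm, hmle, hmlb⟩ := m_exists M a ha0 hsumsq ⟨0, hd⟩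
  have hsuma : ∑ j, a j ≤ Real.sqrt d := cs_sum_le_sqrt_card a ha0 hsumsq
  have hA'lb : 1 - δ ≤ (∑ j, a j * Real.sqrt (m j)) / Real.sqrt M := by
    have h1 : Real.sqrt M - Real.sqrt d ≤ ∑ j, a j * Real.sqrt (m j) := by
      calc Real.sqrt M - Real.sqrt d ≤ Real.sqrt M - ∑ j, a j := by linarith
        _ = ∑ j, ((a j)^2 * Real.sqrt M - a j) := by
            rw [Finset.sum_sub_distrib, ← Finset.sum_mul, hsumsq, one_mul]
        _ ≤ ∑ j, a j * Real.sqrt (m j) := Finset.sum_le_sum (fun j _ => hmlb j)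
    rw [le_div_iff₀ hMR]
    have h2 : Real.sqrt d ≤ δ * Real.sqrt M := by
      rw [div_le_iff₀ hMR] at hMd
      linarith
    nlinarith
  have hA'ub : (∑ j, a j * Real.sqrt (m j)) / Real.sqrt M ≤ 1 := by
    rw [div_le_one hMR]
    exact cs_sum_mul_sqrt_le a m ha0 hsumsq hsumm

  have ha_eq : ∀ j, a j = ‖c j‖ := fun j => by rw [hadef]
  obtain ⟨g, hginj, hgsum⟩ := main_sum_bound hR'pos hMpos a ha0 m hsumm hmle
  obtain ⟨τ, hτ⟩ := exists_perm_extend hd g hginj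
  choose kk hklt hkre using fun j => phase_choice T hTpos (c j)
  obtain ⟨σ, hσ⟩ : ∃ σ : Equiv.Perm (Fin T × Fin d × Fin (R' * M)),
      ∀ p : Fin T × Fin d × Fin (R' * M),
        σ p = (p.1 + (⟨kk (τ p.2).1, hklt _⟩ : Fin T), τ p.2) := by
    refine ⟨⟨fun p => (p.1 + (⟨kk (τ p.2).1, hklt _⟩ : Fin T), τ p.2),
      fun q => (q.1 - (⟨kk q.2.1, hklt _⟩ : Fin T), τ.symm q.2), ?_, ?_⟩, fun p => rfl⟩
    · intro p
      simp only [Equiv.symm_apply_apply, add_sub_cancel_right]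
    · intro q
      simp only [Equiv.apply_symm_apply, sub_add_cancel]
  refine ⟨σ.symm, ?_⟩
  simp only [Equiv.symm_symm]
  set ω : ℂ := Complex.exp (2 * Real.pi * Complex.I / T) with hωdef
  have hτ' : ∀ s : Fin (R' * M), τ ((⟨0, hd⟩ : Fin d), s) = g s := hτ
  have key : (∑ p : Fin T × Fin d × Fin (R' * M),
      (starRingEnd ℂ) (if p.2.1 = (⟨0, hd⟩ : Fin d)
          then varthetaVec T p.1 * (muVec (R' * M) p.2.2 : ℂ) else 0) *
        (varthetaVec T (σ p).1 * c (σ p).2.1 * (muVec (R' * M) (σ p).2.2 : ℂ)))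
      = ∑ s : Fin (R' * M),
          ((muVec (R' * M) s * muVec (R' * M) ((g s).2) : ℝ) : ℂ) *
            (ω ^ (kk ((g s).1)) * c ((g s).1)) := by
    rw [Fintype.sum_prod_type]
    calc ∑ t : Fin T, ∑ x : Fin d × Fin (R' * M),
        (starRingEnd ℂ) (if x.1 = (⟨0, hd⟩ : Fin d)
            then varthetaVec T t * (muVec (R' * M) x.2 : ℂ) else 0) *
          (varthetaVec T (σ (t, x)).1 * c (σ (t, x)).2.1 *
            (muVec (R' * M) (σ (t, x)).2.2 : ℂ))
        = ∑ t : Fin T, ∑ s : Fin (R' * M),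
          (starRingEnd ℂ) (varthetaVec T t * (muVec (R' * M) s : ℂ)) *
            (varthetaVec T (t + (⟨kk ((g s).1), hklt _⟩ : Fin T)) * c ((g s).1) *
              (muVec (R' * M) ((g s).2) : ℂ)) := by
          refine Finset.sum_congr rfl (fun t _ => ?_)
          rw [Fintype.sum_prod_type]
          rw [Finset.sum_eq_single (⟨0, hd⟩ : Fin d)]
          · refine Finset.sum_congr rfl (fun s _ => ?_)
            rw [if_pos rfl]
            have hσz : σ (t, (⟨0, hd⟩ : Fin d), s)
                = (t + (⟨kk ((g s).1), hklt _⟩ : Fin T), g s) := by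
              rw [hσ]
              simp only [hτ' s]
            rw [hσz]
          · intro b _ hb
            apply Finset.sum_eq_zero
            intro s _
            rw [if_neg hb]
            simp
          · intro h
            exact absurd (Finset.mem_univ _) h
      _ = ∑ s : Fin (R' * M), ∑ t : Fin T,
          (starRingEnd ℂ) (varthetaVec T t * (muVec (R' * M) s : ℂ)) *
            (varthetaVec T (t + (⟨kk ((g s).1), hklt _⟩ : Fin T)) * c ((g s).1) *
              (muVec (R' * M) ((g s).2) : ℂ)) := Finset.sum_comm
      _ = ∑ s : Fin (R' * M),
          ((muVec (R' * M) s * muVec (R' * M) ((g s).2) : ℝ) : ℂ) *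
            (ω ^ (kk ((g s).1)) * c ((g s).1)) := by
          refine Finset.sum_congr rfl (fun s _ => ?_)
          have hTne : (T:ℂ) ≠ 0 := by exact_mod_cast hTpos.ne'
          calc ∑ t : Fin T,
              (starRingEnd ℂ) (varthetaVec T t * (muVec (R' * M) s : ℂ)) *
                (varthetaVec T (t + (⟨kk ((g s).1), hklt _⟩ : Fin T)) * c ((g s).1) *
                  (muVec (R' * M) ((g s).2) : ℂ))
              = ∑ t : Fin T, ((T:ℂ)⁻¹ * ω ^ (kk ((g s).1))) *
                  ((muVec (R' * M) s : ℂ) * c ((g s).1) *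
                    (muVec (R' * M) ((g s).2) : ℂ)) := by
                refine Finset.sum_congr rfl (fun t _ => ?_)
                rw [map_mul, Complex.conj_ofReal]
                rw [show (starRingEnd ℂ) (varthetaVec T t) * (muVec (R' * M) s : ℂ) *
                    (varthetaVec T (t + (⟨kk ((g s).1), hklt _⟩ : Fin T)) * c ((g s).1) *
                      (muVec (R' * M) ((g s).2) : ℂ))
                    = ((starRingEnd ℂ) (varthetaVec T t) *
                        varthetaVec T (t + (⟨kk ((g s).1), hklt _⟩ : Fin T))) *
                      ((muVec (R' * M) s : ℂ) * c ((g s).1) *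
                        (muVec (R' * M) ((g s).2) : ℂ)) by ring]
                rw [vartheta_conj_mul T hTpos t (⟨kk ((g s).1), hklt _⟩ : Fin T)]
            _ = ((muVec (R' * M) s * muVec (R' * M) ((g s).2) : ℝ) : ℂ) *
                  (ω ^ (kk ((g s).1)) * c ((g s).1)) := by
                rw [Finset.sum_const, Finset.card_univ, Fintype.card_fin, nsmul_eq_mul]
                push_cast
                field_simp
  rw [key, Complex.re_sum]
  have hre : ∀ s : Fin (R' * M),
      (muVec (R' * M) s * muVec (R' * M) ((g s).2)) * (a ((g s).1) * Real.cos (Real.pi / T))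
        ≤ ((((muVec (R' * M) s * muVec (R' * M) ((g s).2) : ℝ) : ℂ) *
            (ω ^ (kk ((g s).1)) * c ((g s).1))).re) := by
    intro s
    rw [Complex.re_ofReal_mul]
    apply mul_le_mul_of_nonneg_left _ (mul_nonneg (mu_nonneg _) (mu_nonneg _))
    rw [ha_eq]
    exact hkre ((g s).1)
  have hmain : Real.cos (Real.pi / T) * (harmonic' R' *
      ((∑ j, a j * Real.sqrt (m j)) / (harmonic' (R' * M) * Real.sqrt M)))
      ≤ ∑ s : Fin (R' * M),
        (((muVec (R' * M) s * muVec (R' * M) ((g s).2) : ℝ) : ℂ) *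
          (ω ^ (kk ((g s).1)) * c ((g s).1))).re := by
    calc Real.cos (Real.pi / T) * (harmonic' R' *
        ((∑ j, a j * Real.sqrt (m j)) / (harmonic' (R' * M) * Real.sqrt M)))
        ≤ Real.cos (Real.pi / T) *
          ∑ s : Fin (R' * M), muVec (R' * M) s * a ((g s).1) * muVec (R' * M) ((g s).2) := by
          apply mul_le_mul_of_nonneg_left hgsum (by linarith)
      _ = ∑ s : Fin (R' * M), (muVec (R' * M) s * muVec (R' * M) ((g s).2)) *
          (a ((g s).1) * Real.cos (Real.pi / T)) := by
          rw [Finset.mul_sum]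
          exact Finset.sum_congr rfl (fun s _ => by ring)
      _ ≤ _ := Finset.sum_le_sum (fun s _ => hre s)
  refine le_trans ?_ hmain
  -- final numeric bound
  have hQub : harmonic' R' / harmonic' (R' * M) ≤ 1 := by
    apply div_le_one_of_le₀ (harmonic'_mono (Nat.le_mul_of_pos_right R' hMpos))
    exact (harmonic'_pos (Nat.mul_pos hR'pos hMpos)).le
  have hfact : harmonic' R' * ((∑ j, a j * Real.sqrt (m j)) /
      (harmonic' (R' * M) * Real.sqrt M))
      = (harmonic' R' / harmonic' (R' * M)) *
        ((∑ j, a j * Real.sqrt (m j)) / Real.sqrt M) := by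
    field_simp
  rw [hfact]
  have hcos1 : Real.cos (Real.pi / T) ≤ 1 := Real.cos_le_one _
  set x := Real.cos (Real.pi / T)
  set y := harmonic' R' / harmonic' (R' * M)
  set w := (∑ j, a j * Real.sqrt (m j)) / Real.sqrt M
  have h1δ : (0:ℝ) ≤ 1 - δ := by linarith
  have hyw : (1 - δ) * (1 - δ) ≤ y * w :=
    mul_le_mul hQ hA'lb h1δ (le_trans h1δ hQ)
  have hyw1 : y * w ≤ 1 := by nlinarith
  calc 1 - ε ≤ 1 - 3 * δ := by linarith
    _ ≤ (1 - δ) * ((1 - δ) * (1 - δ)) := by nlinarith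
    _ ≤ x * (y * w) := by nlinarith
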